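/- Let $D, \hat D \in \mathcal{A}_T^2$ with canonical decompositions $D = D' + \sum_{i=1}^p \theta_{\tau_i}^i\mathbb{1}_{\{\tau_i \le \cdot\}}$ and $\hat D = \hat D' + \sum_{i=1}^p \hat\theta_{\tau_i}^i\mathbb{1}_{\{\tau_i \le \cdot\}}$, where $D', \hat D'$ are predictable. If $D - \hat D$ is non-decreasing, then $D' - \hat D'$ is non-decreasing and $\theta_{\tau_i}^i \ge \hat\theta_{\tau_i}^i$ a.s. on $\{\tau_i \le T\}$ for each $i \in \{1,\ldots,p\}$. -/

import Mathlib

open MeasureTheory Finset Function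

noncomputable section

variable {Ω : Type*}

def intdN (τ : Ω → ℝ) (H : ℝ → Ω → ℝ) (t : ℝ) (ω : Ω) : ℝ :=
  if τ ω ≤ t then H (τ ω) ω else 0

def intdM (τ : Ω → ℝ) (lam : ℝ → Ω → ℝ) (H : ℝ → Ω → ℝ) (t : ℝ) (ω : Ω) : ℝ :=
  intdN τ H t ω - ∫ s in Set.Ioc (0 : ℝ) t, H s ω * lam s ω

/-- The predictable σ-algebra on `ℝ × Ω`, generated by the stochastic intervals
`(a,b] × A` with `A ∈ ℱ_a`. -/
def predictableSigma {m : MeasurableSpace Ω} (ℱ : Filtration ℝ m) :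
    MeasurableSpace (ℝ × Ω) :=
  MeasurableSpace.generateFrom
    {S | ∃ a b : ℝ, ∃ A : Set Ω, MeasurableSet[ℱ a] A ∧ S = Set.Ioc a b ×ˢ A}

/-- A process is predictable if it is measurable with respect to the predictable σ-algebra. -/
def Predictable {m : MeasurableSpace Ω} (ℱ : Filtration ℝ m) (X : ℝ → Ω → ℝ) : Prop :=
  @Measurable _ _ (predictableSigma ℱ) _ fun q : ℝ × Ω => X q.1 q.2

/-- Membership in `𝒜²_T`: rcll adapted process of finite variation starting at `0`
with square-integrable total variation. -/
def InA2 {m : MeasurableSpace Ω} (P : Measure Ω) (ℱ : Filtration ℝ m) (T : ℝ)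
    (D : ℝ → Ω → ℝ) : Prop :=
  Adapted ℱ D ∧ (∀ ω, D 0 ω = 0) ∧
    (∀ ω, ∀ t ∈ Set.Ico (0 : ℝ) T,
      Filter.Tendsto (fun s => D s ω) (nhdsWithin t (Set.Ioi t)) (nhds (D t ω))) ∧
    (∀ ω, BoundedVariationOn (fun s => D s ω) (Set.Icc 0 T)) ∧
    Integrable (fun ω => (eVariationOn (fun s => D s ω) (Set.Icc 0 T)).toReal ^ 2) P

/-- Membership in `ℋ²_{λⁱ,T}`: `E[∫₀ᵀ U_t² λⁱ_t dt] < ∞`. -/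
def InH2lam {m : MeasurableSpace Ω} (P : Measure Ω) (lam : ℝ → Ω → ℝ) (T : ℝ)
    (U : ℝ → Ω → ℝ) : Prop :=
  Integrable (fun ω => ∫ t in Set.Ioc (0 : ℝ) T, (U t ω) ^ 2 * lam t ω) P

/-! Pathwise, `G = D - D̂` is non-decreasing and `G = F + ∑ᵢ cᵢ 1_{τᵢ ≤ ·}` with `F = D' - D̂'`
left-continuous at the distinct times `τᵢ` and `cᵢ = θⁱ_{τᵢ} - θ̂ⁱ_{τᵢ}`. Just left of `τᵢ` the
jump sum is constant, so `cᵢ = G(τᵢ) - G(τᵢ-) ≥ 0`. Between jump times `F` differs from `G` by a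
constant, hence is non-decreasing there, and left-continuity carries this across each `τᵢ`. -/

open Filter Topology

theorem BoundedVariationOn.tendsto_nhdsLT_of_leftLim_eq {E : Type*} [EMetricSpace E]
    [CompleteSpace E] {f : ℝ → E} {a b x : ℝ} (hf : BoundedVariationOn f (Set.Icc a b))
    (hx : x ∈ Set.Ioc a b) (hleft : Function.leftLim f x = f x) :
    Tendsto f (𝓝[<] x) (𝓝 (f x)) := by
  obtain ⟨l, hl⟩ := hf.exists_tendsto_left x
  have hIcc : Set.Icc a b ∈ 𝓝[<] x :=
    mem_of_superset (Ioo_mem_nhdsLT hx.1) fun y hy => ⟨hy.1.le, hy.2.le.trans hx.2⟩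
  rw [nhdsWithin_inter_of_mem hIcc] at hl
  rwa [← hleft, leftLim_eq_of_tendsto hl]

theorem monotoneOn_Icc_of_tendsto_nhdsLT_of_gap (S : Finset ℝ) {F : ℝ → ℝ} {a b : ℝ}
    (hcont : ∀ x ∈ S, x ∈ Set.Ioc a b → Tendsto F (𝓝[<] x) (𝓝 (F x)))
    (hgap : ∀ s ∈ Set.Icc a b, ∀ t ∈ Set.Icc a b, s ≤ t → (∀ x ∈ S, x ∉ Set.Ioc s t) →
      F s ≤ F t) :
    MonotoneOn F (Set.Icc a b) := by
  induction S using Finset.induction_on with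
  | empty => exact fun s hs t ht hst => hgap s hs t ht hst (by simp)
  | insert y S _ ih =>
    refine ih (fun x hx => hcont x (mem_insert_of_mem hx)) fun s hs t ht hst hS => ?_
    by_cases hy : y ∈ Set.Ioc s t
    · have hyab : y ∈ Set.Icc a b := ⟨hs.1.trans hy.1.le, hy.2.trans ht.2⟩
      -- for `u < y` close to `y`, `(s, u]` avoids `insert y S`; let `u → y`
      have hsy : F s ≤ F y := by
        refine ge_of_tendsto (hcont y (mem_insert_self y S) ⟨hs.1.trans_lt hy.1, hyab.2⟩) ?_
        filter_upwards [Ioo_mem_nhdsLT hy.1] with u hu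
        refine hgap s hs u ⟨hs.1.trans hu.1.le, hu.2.le.trans hyab.2⟩ hu.1.le ?_
        rintro x hx ⟨hsx, hxu⟩
        rcases mem_insert.mp hx with rfl | hxS
        · exact hu.2.not_ge hxu
        · exact hS x hxS ⟨hsx, hxu.trans (hu.2.le.trans hy.2)⟩
      refine hsy.trans (hgap y hyab t ht hy.2 ?_)
      rintro x hx ⟨hyx, hxt⟩
      rcases mem_insert.mp hx with rfl | hxS
      · exact hyx.false
      · exact hS x hxS ⟨hy.1.trans hyx, hxt⟩
    · refine hgap s hs t ht hst fun x hx => ?_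
      rcases mem_insert.mp hx with rfl | hxS
      · exact hy
      · exact hS x hxS

section JumpSum

variable {ι : Type*} [Fintype ι]

def jumpSum (τ c : ι → ℝ) (t : ℝ) : ℝ :=
  ∑ i, if τ i ≤ t then c i else 0

theorem jumpSum_eq_of_forall_notMem_Ioc (τ c : ι → ℝ) {s t : ℝ} (hst : s ≤ t)
    (hgap : ∀ i, τ i ∉ Set.Ioc s t) : jumpSum τ c s = jumpSum τ c t := by
  refine sum_congr rfl fun i _ => if_congr ⟨fun h => h.trans hst, fun h => ?_⟩ rfl rfl
  by_contra hs
  exact hgap i ⟨not_le.mp hs, h⟩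

theorem eventually_jumpSum_nhdsLT {τ : ι → ℝ} (hτ : Injective τ) (c : ι → ℝ) (i : ι) :
    ∀ᶠ s in 𝓝[<] τ i, jumpSum τ c s = jumpSum τ c (τ i) - c i := by
  classical
  have hbefore : ∀ᶠ s in 𝓝[<] τ i, ∀ j, (τ j ≤ s ↔ τ j < τ i) := by
    rw [eventually_all]
    intro j
    rcases lt_or_ge (τ j) (τ i) with hj | hj
    · filter_upwards [Ioo_mem_nhdsLT hj] with s hs
      exact iff_of_true hs.1.le hj
    · filter_upwards [self_mem_nhdsWithin] with s hs
      exact iff_of_false (hs.trans_le hj).not_ge hj.not_gt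
  filter_upwards [hbefore] with s hs
  rw [eq_sub_iff_add_eq, jumpSum, jumpSum, ← Fintype.sum_ite_eq' i c, ← sum_add_distrib]
  refine sum_congr rfl fun j _ => ?_
  rw [if_congr (hs j) rfl rfl]
  rcases lt_trichotomy (τ j) (τ i) with h | h | h
  · simp [h, h.le, hτ.ne_iff.mp h.ne]
  · simp [hτ h]
  · simp [h.not_ge, h.not_gt, hτ.ne_iff.mp h.ne']

variable {a b : ℝ} {G F : ℝ → ℝ} {τ c : ι → ℝ}

theorem MonotoneOn.of_add_jumpSum (hG : MonotoneOn G (Set.Icc a b))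
    (hGF : ∀ t ∈ Set.Icc a b, G t = F t + jumpSum τ c t)
    (hF : ∀ i, τ i ∈ Set.Ioc a b → Tendsto F (𝓝[<] τ i) (𝓝 (F (τ i)))) :
    MonotoneOn F (Set.Icc a b) := by
  refine monotoneOn_Icc_of_tendsto_nhdsLT_of_gap (univ.image τ) ?_ fun s hs t ht hst hgap => ?_
  · intro x hx
    obtain ⟨i, -, rfl⟩ := mem_image.mp hx
    exact hF i
  · have hjump := jumpSum_eq_of_forall_notMem_Ioc τ c hst fun i =>
      hgap (τ i) (mem_image_of_mem τ (mem_univ i))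
    have := hG hs ht hst
    rw [hGF s hs, hGF t ht, hjump] at this
    linarith

theorem jump_nonneg_of_monotoneOn_add_jumpSum (hτ : Injective τ)
    (hG : MonotoneOn G (Set.Icc a b))
    (hGF : ∀ t ∈ Set.Icc a b, G t = F t + jumpSum τ c t) {i : ι} (hi : τ i ∈ Set.Ioc a b)
    (hF : Tendsto F (𝓝[<] τ i) (𝓝 (F (τ i)))) :
    0 ≤ c i := by
  have hτi : τ i ∈ Set.Icc a b := Set.Ioc_subset_Icc_self hi
  have hGleft : Tendsto G (𝓝[<] τ i) (𝓝 (G (τ i) - c i)) := by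
    rw [hGF _ hτi, add_sub_assoc]
    refine (hF.add tendsto_const_nhds).congr' ?_
    filter_upwards [eventually_jumpSum_nhdsLT hτ c i, Ioo_mem_nhdsLT hi.1] with s hs hsab
    rw [hGF s ⟨hsab.1.le, hsab.2.le.trans hi.2⟩, hs]
  have : G (τ i) - c i ≤ G (τ i) := by
    refine le_of_tendsto hGleft ?_
    filter_upwards [Ioo_mem_nhdsLT hi.1] with s hs
    exact hG ⟨hs.1.le, hs.2.le.trans hi.2⟩ hτi hs.2.le
  linarith

end JumpSum

theorem sum_intdN_sub_sum_intdN {ι : Type*} [Fintype ι] (τ : ι → Ω → ℝ) (θ θh : ι → ℝ → Ω → ℝ)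
    (t : ℝ) (ω : Ω) :
    ∑ i, intdN (τ i) (θ i) t ω - ∑ i, intdN (τ i) (θh i) t ω =
      jumpSum (fun i => τ i ω) (fun i => θ i (τ i ω) ω - θh i (τ i ω) ω) t := by
  rw [← sum_sub_distrib]
  refine sum_congr rfl fun i _ => ?_
  unfold intdN
  split_ifs <;> simp

theorem nondecreasing_decompositions_comparison_general
    {m : MeasurableSpace Ω} (P : Measure Ω)
    (ℱ : Filtration ℝ m) (T : ℝ) (p : ℕ)
    (τ : Fin p → Ω → ℝ)
    (hτpos : ∀ᵐ ω ∂P, ∀ i, 0 < τ i ω)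
    (hτord : ∀ᵐ ω ∂P, StrictMono fun i => τ i ω)
    (D Dh D' Dh' : ℝ → Ω → ℝ) (θ θh : Fin p → ℝ → Ω → ℝ)
    (hD' : Predictable ℱ D' ∧ InA2 P ℱ T D')
    (hDh' : Predictable ℱ Dh' ∧ InA2 P ℱ T Dh')
    -- the canonical decompositions
    (hdecD : ∀ᵐ ω ∂P, ∀ t ∈ Set.Icc (0 : ℝ) T,
      D t ω = D' t ω + ∑ i, intdN (τ i) (θ i) t ω)
    (hdecDh : ∀ᵐ ω ∂P, ∀ t ∈ Set.Icc (0 : ℝ) T,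
      Dh t ω = Dh' t ω + ∑ i, intdN (τ i) (θh i) t ω)
    -- rcll predictable processes do not jump at the totally inaccessible times τᵢ
    (hD'cont : ∀ᵐ ω ∂P, ∀ i, τ i ω ≤ T →
      leftLim (fun s => D' s ω) (τ i ω) = D' (τ i ω) ω)
    (hDh'cont : ∀ᵐ ω ∂P, ∀ i, τ i ω ≤ T →
      leftLim (fun s => Dh' s ω) (τ i ω) = Dh' (τ i ω) ω)
    -- D - D̂ is non-decreasing
    (hmono : ∀ᵐ ω ∂P, MonotoneOn (fun t => D t ω - Dh t ω) (Set.Icc 0 T)) :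
    (∀ᵐ ω ∂P, MonotoneOn (fun t => D' t ω - Dh' t ω) (Set.Icc 0 T)) ∧
    (∀ i, ∀ᵐ ω ∂P, τ i ω ≤ T → θh i (τ i ω) ω ≤ θ i (τ i ω) ω) := by
  have key : ∀ᵐ ω ∂P, MonotoneOn (fun t => D' t ω - Dh' t ω) (Set.Icc 0 T) ∧
      ∀ i, τ i ω ≤ T → θh i (τ i ω) ω ≤ θ i (τ i ω) ω := by
    filter_upwards [hτpos, hτord, hdecD, hdecDh, hD'cont, hDh'cont, hmono] with
      ω hpos hord hdec hdech hcont hconth hmonoω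
    have hGF : ∀ t ∈ Set.Icc (0 : ℝ) T, D t ω - Dh t ω = D' t ω - Dh' t ω +
        jumpSum (fun i => τ i ω) (fun i => θ i (τ i ω) ω - θh i (τ i ω) ω) t := by
      intro t ht
      rw [hdec t ht, hdech t ht, ← sum_intdN_sub_sum_intdN]
      ring
    have hF : ∀ i, τ i ω ∈ Set.Ioc 0 T → Tendsto (fun t => D' t ω - Dh' t ω)
        (𝓝[<] τ i ω) (𝓝 (D' (τ i ω) ω - Dh' (τ i ω) ω)) := fun i hi =>
      (hD'.2.2.2.2.1 ω |>.tendsto_nhdsLT_of_leftLim_eq hi (hcont i hi.2)).sub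
        (hDh'.2.2.2.2.1 ω |>.tendsto_nhdsLT_of_leftLim_eq hi (hconth i hi.2))
    refine ⟨hmonoω.of_add_jumpSum hGF hF, fun i hi => ?_⟩
    exact sub_nonneg.mp <| jump_nonneg_of_monotoneOn_add_jumpSum hord.injective hmonoω hGF
      ⟨hpos i, hi⟩ (hF i ⟨hpos i, hi⟩)
  exact ⟨key.mono fun ω h => h.1, fun i => key.mono fun ω h => h.2 i⟩

/-- If `D, D̂ ∈ 𝒜²_T` have canonical decompositions `D = D' + ∑ᵢ θⁱ_{τᵢ} 1_{τᵢ ≤ ·}` and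
`D̂ = D̂' + ∑ᵢ θ̂ⁱ_{τᵢ} 1_{τᵢ ≤ ·}` with `D', D̂'` predictable (hence, the default times being
totally inaccessible, continuous at the `τᵢ`), and if `D - D̂` is non-decreasing, then
`D' - D̂'` is non-decreasing and `θⁱ_{τᵢ} ≥ θ̂ⁱ_{τᵢ}` a.s. on `{τᵢ ≤ T}` for each `i`. -/
theorem nondecreasing_decompositions_comparison
    {m : MeasurableSpace Ω} (P : Measure Ω) [IsProbabilityMeasure P]
    (ℱ : Filtration ℝ m) (T : ℝ) (hT : 0 < T) (p : ℕ)
    (τ : Fin p → Ω → ℝ) (lam : Fin p → ℝ → Ω → ℝ)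
    (hτpos : ∀ᵐ ω ∂P, ∀ i, 0 < τ i ω)
    (hτord : ∀ᵐ ω ∂P, StrictMono fun i => τ i ω)
    (D Dh D' Dh' : ℝ → Ω → ℝ) (θ θh : Fin p → ℝ → Ω → ℝ)
    (hD : InA2 P ℱ T D) (hDh : InA2 P ℱ T Dh)
    (hD' : Predictable ℱ D' ∧ InA2 P ℱ T D')
    (hDh' : Predictable ℱ Dh' ∧ InA2 P ℱ T Dh')
    (hθ : ∀ i, InH2lam P (lam i) T (θ i))
    (hθh : ∀ i, InH2lam P (lam i) T (θh i))
    -- the canonical decompositions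
    (hdecD : ∀ᵐ ω ∂P, ∀ t ∈ Set.Icc (0 : ℝ) T,
      D t ω = D' t ω + ∑ i, intdN (τ i) (θ i) t ω)
    (hdecDh : ∀ᵐ ω ∂P, ∀ t ∈ Set.Icc (0 : ℝ) T,
      Dh t ω = Dh' t ω + ∑ i, intdN (τ i) (θh i) t ω)
    -- rcll predictable processes do not jump at the totally inaccessible times τᵢ
    (hD'cont : ∀ᵐ ω ∂P, ∀ i, τ i ω ≤ T →
      leftLim (fun s => D' s ω) (τ i ω) = D' (τ i ω) ω)
    (hDh'cont : ∀ᵐ ω ∂P, ∀ i, τ i ω ≤ T →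
      leftLim (fun s => Dh' s ω) (τ i ω) = Dh' (τ i ω) ω)
    -- D - D̂ is non-decreasing
    (hmono : ∀ᵐ ω ∂P, MonotoneOn (fun t => D t ω - Dh t ω) (Set.Icc 0 T)) :
    (∀ᵐ ω ∂P, MonotoneOn (fun t => D' t ω - Dh' t ω) (Set.Icc 0 T)) ∧
    (∀ i, ∀ᵐ ω ∂P, τ i ω ≤ T → θh i (τ i ω) ω ≤ θ i (τ i ω) ω) :=
  nondecreasing_decompositions_comparison_general P ℱ T p τ hτpos hτord D Dh D' Dh' θ θh hD' hDh'
    hdecD hdecDh hD'cont hDh'cont hmono
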